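/- Let ΓD be a connected cubic graph with a bridge (a,b), and let c and d be the other two neighbours of a. Suppose (c,d) is an edge of ΓD, let e be the third neighbour of c (besides a and d) and let f be the third neighbour of d (besides a and c), and suppose e ≠ f. Then the graph obtained from ΓD by deleting the vertices c and d (together with their incident edges) and adding the edges (a,e) and (a,f) is a connected cubic graph with two fewer vertices than ΓD, in which the edge (a,b) is still a bridge. -/

import Mathlib

open SimpleGraph

/-- A graph is cubic if every vertex has exactly three neighbours. -/
def IsCubic {V : Type*} (G : SimpleGraph V) : Prop :=
  ∀ v : V, (G.neighborSet v).ncard = 3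

/-- A cracker of `G`: a nonempty set of edges of `G`, no two of which share a
vertex, whose deletion disconnects `G`, while no proper subset disconnects `G`. -/
def IsCracker {V : Type*} (G : SimpleGraph V) (C : Set (Sym2 V)) : Prop :=
  C.Nonempty ∧ C ⊆ G.edgeSet ∧
    C.Pairwise (fun e f => ∀ v : V, ¬(v ∈ e ∧ v ∈ f)) ∧
    ¬(G.deleteEdges C).Connected ∧
    ∀ C' : Set (Sym2 V), C' ⊂ C → (G.deleteEdges C').Connected

/-- A `k`-cracker is a cracker consisting of `k` edges. -/
def IsKCracker {V : Type*} (G : SimpleGraph V) (C : Set (Sym2 V)) (k : ℕ) : Prop :=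
  IsCracker G C ∧ C.ncard = k

/-- Delete the vertices c and d (with their incident edges) and add the edges (a,e)
and (a,f). -/
def removeTriangle {V : Type*} (G : SimpleGraph V) (c d a e f : V) :
    SimpleGraph {x : V // x ≠ c ∧ x ≠ d} :=
  SimpleGraph.fromRel (fun p q =>
    G.Adj p.1 q.1 ∨ (p.1 = a ∧ q.1 = e) ∨ (p.1 = a ∧ q.1 = f))

/-!
Collapsing the triangle onto `a`, i.e. mapping `c, d ↦ a` and fixing every other vertex, sends
each edge of `G` to an edge or a loop of the new graph (`ce` and `df` become `ae` and `af`), so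
walks of `G` project to walks of the new graph and connectivity survives. Conversely the new
edges `ae`, `af` are shortcuts of the paths `a c e`, `a d f`, which avoid the bridge `ab`, so a
walk from `a` to `b` avoiding `ab` in the new graph lifts to one in `G`. For cubicity, `a` trades
its neighbours `c, d` for `e, f`, `e` trades `c` for `a`, `f` trades `d` for `a`, and no other
neighbourhood changes; `e, f ≠ b` because a bridge lies on no triangle.
-/

namespace SimpleGraph

variable {V W : Type*} {G : SimpleGraph V}

theorem Reachable.map_of_adj {H : SimpleGraph W} (φ : V → W)
    (hφ : ∀ ⦃x y⦄, G.Adj x y → H.Reachable (φ x) (φ y)) {x y : V} (h : G.Reachable x y) :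
    H.Reachable (φ x) (φ y) := by
  rw [reachable_iff_reflTransGen] at h ⊢
  exact Relation.ReflTransGen.lift' φ
    (fun _ _ hxy => (reachable_iff_reflTransGen _ _).mp (hφ hxy)) x y h

theorem Adj.deleteEdges_singleton {a b x y : V} (h : G.Adj x y) (hxa : x ≠ a) (hxb : x ≠ b) :
    (G.deleteEdges {s(a, b)}).Adj x y := by
  simp [h, hxa, hxb]

theorem reachable_deleteEdges_of_adj_of_adj {a b c x : V} (hac : G.Adj a c) (hcx : G.Adj c x)
    (hcb : c ≠ b) : (G.deleteEdges {s(a, b)}).Reachable a x :=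
  (hac.symm.deleteEdges_singleton hac.ne' hcb).symm.reachable.trans
    (hcx.deleteEdges_singleton hac.ne' hcb).reachable

theorem IsBridge.not_adj_of_adj {a b c : V} (hbr : G.IsBridge s(a, b)) (hac : G.Adj a c)
    (hcb : c ≠ b) : ¬G.Adj c b := fun hcb' =>
  isBridge_iff.mp hbr (reachable_deleteEdges_of_adj_of_adj hac hcb' hcb)

end SimpleGraph

theorem IsCubic.finite_neighborSet {V : Type*} {G : SimpleGraph V} (hG : IsCubic G) (v : V) :
    (G.neighborSet v).Finite :=
  Set.finite_of_ncard_pos (by rw [hG v]; norm_num)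

theorem IsCubic.neighborSet_eq {V : Type*} {G : SimpleGraph V} (hG : IsCubic G) {v x y z : V}
    (hx : G.Adj v x) (hy : G.Adj v y) (hz : G.Adj v z) (hxy : x ≠ y) (hxz : x ≠ z) (hyz : y ≠ z) :
    G.neighborSet v = {x, y, z} := by
  have h3 : ({x, y, z} : Set V).ncard = 3 := Set.ncard_eq_three.mpr ⟨x, y, z, hxy, hxz, hyz, rfl⟩
  refine (Set.eq_of_subset_of_ncard_le ?_ ?_ (hG.finite_neighborSet v)).symm
  · rintro w (rfl | rfl | rfl) <;> assumption
  · rw [hG v, h3]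

theorem Nat.card_subtype_ne_and_ne_add_two {V : Type*} [Finite V] {c d : V}
    (hcd : c ≠ d) : Nat.card {x // x ≠ c ∧ x ≠ d} + 2 = Nat.card V := by
  have := Fintype.ofFinite V
  classical
  have hfilter : Finset.univ.filter (fun x => x ≠ c ∧ x ≠ d) = Finset.univ \ {c, d} := by
    ext; simp
  rw [Nat.card_eq_fintype_card, Nat.card_eq_fintype_card, Fintype.card_subtype, hfilter,
    ← Finset.card_pair hcd, Finset.card_sdiff_add_card_eq_card (Finset.subset_univ _),
    Finset.card_univ]

section removeTriangle

variable {V : Type*} {G : SimpleGraph V} {a b c d e f : V}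

theorem removeTriangle_adj {p q : {x : V // x ≠ c ∧ x ≠ d}} :
    (removeTriangle G c d a e f).Adj p q ↔
      p ≠ q ∧ (G.Adj p q ∨ s(p.1, q.1) = s(a, e) ∨ s(p.1, q.1) = s(a, f)) := by
  simp only [removeTriangle, SimpleGraph.fromRel_adj, Sym2.eq_iff, G.adj_comm q.1 p.1]
  tauto

theorem removeTriangle_connected (hG : G.Connected) (hNc : G.neighborSet c ⊆ {a, d, e})
    (hNd : G.neighborSet d ⊆ {a, c, f}) (hac : a ≠ c) (had : a ≠ d) :
    (removeTriangle G c d a e f).Connected := by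
  classical
  set G' := removeTriangle G c d a e f
  let a' : {x : V // x ≠ c ∧ x ≠ d} := ⟨a, hac, had⟩
  let φ : V → {x : V // x ≠ c ∧ x ≠ d} := fun x => if h : x ≠ c ∧ x ≠ d then ⟨x, h⟩ else a'
  have hφ_of {x : V} (hx : x ≠ c ∧ x ≠ d) : φ x = ⟨x, hx⟩ := dif_pos hx
  have hφ_triangle {x : V} (hx : ¬(x ≠ c ∧ x ≠ d)) : φ x = a' := dif_neg hx
  have hreach_new (y : {x : V // x ≠ c ∧ x ≠ d}) (hy : y.1 = a ∨ y.1 = e ∨ y.1 = f) :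
      G'.Reachable a' y := by
    by_cases hya : y.1 = a
    · rw [show y = a' from Subtype.ext hya]
    · exact Adj.reachable (removeTriangle_adj.mpr
        ⟨fun h => hya (congrArg Subtype.val h).symm, by grind⟩)
  have hreach_triangle {x y : V} (hxy : G.Adj x y) (hx : ¬(x ≠ c ∧ x ≠ d)) :
      G'.Reachable a' (φ y) := by
    by_cases hy : y ≠ c ∧ y ≠ d
    · rw [hφ_of hy]
      apply hreach_new
      have := @hNc y; have := @hNd y
      grind [mem_neighborSet]
    · rw [hφ_triangle hy]
  have hφ_adj : ∀ ⦃x y : V⦄, G.Adj x y → G'.Reachable (φ x) (φ y) := by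
    intro x y hxy
    by_cases hx : x ≠ c ∧ x ≠ d
    · by_cases hy : y ≠ c ∧ y ≠ d
      · rw [hφ_of hx, hφ_of hy]
        exact Adj.reachable (removeTriangle_adj.mpr
          ⟨fun h => hxy.ne (congrArg Subtype.val h), Or.inl hxy⟩)
      · rw [hφ_triangle hy]
        exact (hreach_triangle hxy.symm hy).symm
    · rw [hφ_triangle hx]
      exact hreach_triangle hxy hx
  rw [connected_iff_exists_forall_reachable]
  refine ⟨a', fun y => ?_⟩
  simpa only [hφ_of ⟨hac, had⟩, hφ_of y.2] using (hG.preconnected a y.1).map_of_adj φ hφ_adj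

theorem removeTriangle_isBridge (hbr : G.IsBridge s(a, b)) (hac : G.Adj a c) (had : G.Adj a d)
    (hce : G.Adj c e) (hdf : G.Adj d f) (hcb : c ≠ b) (hdb : d ≠ b) :
    (removeTriangle G c d a e f).IsBridge s(⟨a, hac.ne, had.ne⟩, ⟨b, hcb.symm, hdb.symm⟩) := by
  rw [isBridge_iff] at hbr ⊢
  refine fun h => hbr (h.map_of_adj Subtype.val fun p q hpq => ?_)
  rw [deleteEdges_adj, removeTriangle_adj] at hpq
  obtain ⟨⟨-, hpq | hpq | hpq⟩, hne⟩ := hpq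
  · refine (deleteEdges_adj.mpr ⟨hpq, fun h => hne ?_⟩).reachable
    rw [Set.mem_singleton_iff] at h ⊢
    exact Sym2.map.injective Subtype.val_injective h
  · rcases Sym2.eq_iff.mp hpq with ⟨hp, hq⟩ | ⟨hp, hq⟩ <;> rw [hp, hq]
    exacts [reachable_deleteEdges_of_adj_of_adj hac hce hcb,
      (reachable_deleteEdges_of_adj_of_adj hac hce hcb).symm]
  · rcases Sym2.eq_iff.mp hpq with ⟨hp, hq⟩ | ⟨hp, hq⟩ <;> rw [hp, hq]
    exacts [reachable_deleteEdges_of_adj_of_adj had hdf hdb,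
      (reachable_deleteEdges_of_adj_of_adj had hdf hdb).symm]

theorem mem_image_val_neighborSet_removeTriangle {v : {x : V // x ≠ c ∧ x ≠ d}} {x : V} :
    x ∈ Subtype.val '' (removeTriangle G c d a e f).neighborSet v ↔
      x ≠ c ∧ x ≠ d ∧ v.1 ≠ x ∧ (G.Adj v x ∨ s(v.1, x) = s(a, e) ∨ s(v.1, x) = s(a, f)) := by
  constructor
  · rintro ⟨q, hq, rfl⟩
    obtain ⟨hne, hadj⟩ := removeTriangle_adj.mp hq
    exact ⟨q.2.1, q.2.2, fun h => hne (Subtype.ext h), hadj⟩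
  · rintro ⟨hxc, hxd, hne, hadj⟩
    exact ⟨⟨x, hxc, hxd⟩,
      removeTriangle_adj.mpr ⟨fun h => hne (congrArg Subtype.val h), hadj⟩, rfl⟩

theorem image_val_neighborSet_removeTriangle_of_ne (hNc : G.neighborSet c ⊆ {a, d, e})
    (hNd : G.neighborSet d ⊆ {a, c, f}) {v : {x : V // x ≠ c ∧ x ≠ d}} (hva : v.1 ≠ a)
    (hve : v.1 ≠ e) (hvf : v.1 ≠ f) :
    Subtype.val '' (removeTriangle G c d a e f).neighborSet v = G.neighborSet v := by
  have hvc : v.1 ∉ G.neighborSet c := fun h => by grind [hNc h]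
  have hvd : v.1 ∉ G.neighborSet d := fun h => by grind [hNd h]
  ext x
  simp only [mem_image_val_neighborSet_removeTriangle, Sym2.eq_iff, mem_neighborSet] at hvc hvd ⊢
  grind [Adj.symm, SimpleGraph.irrefl]

theorem removeTriangle_isCubic (hcub : IsCubic G) (hNa : G.neighborSet a = {b, c, d})
    (hNc : G.neighborSet c = {a, d, e}) (hNd : G.neighborSet d = {a, c, f}) (hcb : c ≠ b)
    (hdb : d ≠ b) (hea : e ≠ a) (hed : e ≠ d) (heb : e ≠ b) (hfa : f ≠ a) (hfc : f ≠ c)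
    (hfb : f ≠ b) (hef : e ≠ f) : IsCubic (removeTriangle G c d a e f) := by
  have hAa (x : V) : G.Adj a x ↔ x = b ∨ x = c ∨ x = d := Set.ext_iff.mp hNa x
  have hAc (x : V) : G.Adj c x ↔ x = a ∨ x = d ∨ x = e := Set.ext_iff.mp hNc x
  have hAd (x : V) : G.Adj d x ↔ x = a ∨ x = c ∨ x = f := Set.ext_iff.mp hNd x
  have hce : G.Adj c e := (hAc e).mpr (by simp)
  have hdf : G.Adj d f := (hAd f).mpr (by simp)
  rintro ⟨v, hvc, hvd⟩
  rw [← Set.ncard_image_of_injective _ Subtype.val_injective]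
  by_cases hva : v = a
  · subst v
    have himg : Subtype.val '' (removeTriangle G c d a e f).neighborSet ⟨a, hvc, hvd⟩ =
        {b, e, f} := by
      ext x
      simp only [mem_image_val_neighborSet_removeTriangle, Sym2.eq_iff, Set.mem_insert_iff,
        Set.mem_singleton_iff]
      grind [Adj.symm, SimpleGraph.irrefl]
    rw [himg, Set.ncard_eq_three]
    exact ⟨b, e, f, heb.symm, hfb.symm, hef, rfl⟩
  by_cases hve : v = e
  · subst v
    have himg : Subtype.val '' (removeTriangle G c d a e f).neighborSet ⟨e, hvc, hvd⟩ =
        insert a (G.neighborSet e \ {c}) := by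
      ext x
      simp only [mem_image_val_neighborSet_removeTriangle, Sym2.eq_iff, Set.mem_insert_iff,
        Set.mem_singleton_iff, Set.mem_sdiff, mem_neighborSet]
      grind [Adj.symm, SimpleGraph.irrefl]
    have ha_notMem : a ∉ G.neighborSet e := fun h => by
      have := (hAa e).mp (G.adj_symm h)
      grind
    rw [himg, Set.ncard_exchange ha_notMem hce.symm, hcub]
  by_cases hvf : v = f
  · subst v
    have himg : Subtype.val '' (removeTriangle G c d a e f).neighborSet ⟨f, hvc, hvd⟩ =
        insert a (G.neighborSet f \ {d}) := by
      ext x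
      simp only [mem_image_val_neighborSet_removeTriangle, Sym2.eq_iff, Set.mem_insert_iff,
        Set.mem_singleton_iff, Set.mem_sdiff, mem_neighborSet]
      grind [Adj.symm, SimpleGraph.irrefl]
    have ha_notMem : a ∉ G.neighborSet f := fun h => by
      have := (hAa f).mp (G.adj_symm h)
      grind
    rw [himg, Set.ncard_exchange ha_notMem hdf.symm, hcub]
  rw [image_val_neighborSet_removeTriangle_of_ne hNc.subset hNd.subset hva hve hvf, hcub]

end removeTriangle

/-- the inverse of a type 3 parthenogenic operation (removal of a
parthenogenic triangle). Deleting the triangle vertices c, d and rejoining a to e and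
f yields a connected cubic graph with two fewer vertices, in which (a,b) is still a
bridge. -/
theorem inverse_parth3_spec {V : Type*} [Fintype V] (G : SimpleGraph V)
    (hG : G.Connected) (hcub : IsCubic G) (a b c d e f : V)
    (hbr : G.IsBridge s(a, b))
    (hac : G.Adj a c) (had : G.Adj a d) (hcd' : c ≠ d) (hcb : c ≠ b) (hdb : d ≠ b)
    (hcd : G.Adj c d)
    (hce : G.Adj c e) (hea : e ≠ a) (hed : e ≠ d)
    (hdf : G.Adj d f) (hfa : f ≠ a) (hfc : f ≠ c)
    (hef : e ≠ f) :
    (removeTriangle G c d a e f).Connected ∧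
      IsCubic (removeTriangle G c d a e f) ∧
      Nat.card {x : V // x ≠ c ∧ x ≠ d} + 2 = Nat.card V ∧
      (removeTriangle G c d a e f).IsBridge
        s(⟨a, hac.ne, had.ne⟩, ⟨b, hcb.symm, hdb.symm⟩) := by
  have hab : G.Adj a b := hbr.reachable_iff_adj.mp (hG.preconnected a b)
  have heb : e ≠ b := fun h => hbr.not_adj_of_adj hac hcb (h ▸ hce)
  have hfb : f ≠ b := fun h => hbr.not_adj_of_adj had hdb (h ▸ hdf)
  have hNa := hcub.neighborSet_eq hab hac had hcb.symm hdb.symm hcd'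
  have hNc := hcub.neighborSet_eq hac.symm hcd hce had.ne hea.symm hed.symm
  have hNd := hcub.neighborSet_eq had.symm hcd.symm hdf hac.ne hfa.symm hfc.symm
  exact ⟨removeTriangle_connected hG hNc.subset hNd.subset hac.ne had.ne,
    removeTriangle_isCubic hcub hNa hNc hNd hcb hdb hea hed heb hfa hfc hfb hef,
    Nat.card_subtype_ne_and_ne_add_two hcd',
    removeTriangle_isBridge hbr hac had hce hdf hcb hdb⟩
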